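/- Let x be an (s,t)-flow with exactly two distinct positive arc flow values a > b where b divides a. Then the minimum number of path flows needed to decompose x equals p₁ + p₂, where p₁ = |x_a|/a for a maximum (s,t)-flow x_a in the support network restricted to arcs with flow value a, and p₂ = |x − x_a|/b. -/

import Mathlib

/-- A multidigraph: a set of arcs `E` over vertices `V`, with source and destination maps. -/
structure MultiDigraph (V E : Type) where
  src : E → V
  dst : E → V

namespace MultiDigraph

variable {V E : Type}

/-- `p` is a directed walk from `u` to `v` (as a list of consecutive arcs). -/
def IsWalk (D : MultiDigraph V E) : V → V → List E → Prop
  | u, v, [] => u = v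
  | u, v, e :: p => D.src e = u ∧ D.IsWalk (D.dst e) v p

/-- A directed path from `u` to `v`: a walk without repeated arcs. -/
def IsPath (D : MultiDigraph V E) (u v : V) (p : List E) : Prop :=
  D.IsWalk u v p ∧ p.Nodup

/-- A directed cycle: a nonempty closed walk without repeated arcs. -/
def IsCycle (D : MultiDigraph V E) (p : List E) : Prop :=
  p ≠ [] ∧ p.Nodup ∧ ∃ u, D.IsWalk u u p

/-- The flow sending value `r` along each arc of `p` and `0` elsewhere. -/
def pathFlow [DecidableEq E] (p : List E) (r : ℝ) : E → ℝ :=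
  fun e => if e ∈ p then r else 0

variable [Fintype E] [DecidableEq V]

/-- Net flow out of a vertex `v` (outflow minus inflow), i.e. the balance `b_x(v)`. -/
def excess (D : MultiDigraph V E) (x : E → ℝ) (v : V) : ℝ :=
  (∑ e : E, if D.src e = v then x e else 0) - (∑ e : E, if D.dst e = v then x e else 0)

/-- An `(s,t)`-flow: nonnegative and conserved at every vertex other than `s` and `t`. -/
def IsSTFlow (D : MultiDigraph V E) (s t : V) (x : E → ℝ) : Prop :=
  (∀ e, 0 ≤ x e) ∧ ∀ v, v ≠ s → v ≠ t → D.excess x v = 0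

/-- `x` respects the capacity function `u`. -/
def IsFlowUnder (D : MultiDigraph V E) (u x : E → ℝ) : Prop :=
  ∀ e, 0 ≤ x e ∧ x e ≤ u e

/-- `x` is a maximum `(s,t)`-flow with respect to capacities `u`. -/
def IsMaxFlow (D : MultiDigraph V E) (u : E → ℝ) (s t : V) (x : E → ℝ) : Prop :=
  D.IsFlowUnder u x ∧ D.IsSTFlow s t x ∧
    ∀ y, D.IsFlowUnder u y → D.IsSTFlow s t y → D.excess y s ≤ D.excess x s

/-- A circulation: a (finite) sum of cycle flows. -/
def IsCirculation [DecidableEq E] (D : MultiDigraph V E) (c : E → ℝ) : Prop :=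
  ∃ (n : ℕ) (C : Fin n → List E) (r : Fin n → ℝ),
    (∀ i, D.IsCycle (C i) ∧ 0 < r i) ∧ c = ∑ i, pathFlow (C i) (r i)

/-- `x` decomposes into exactly `k` `(s,t)`-path flows. -/
def Splittable [DecidableEq E] (D : MultiDigraph V E) (s t : V) (x : E → ℝ) (k : ℕ) : Prop :=
  ∃ (P : Fin k → List E) (r : Fin k → ℝ),
    (∀ i, D.IsPath s t (P i) ∧ 0 < r i) ∧ x = ∑ i, pathFlow (P i) (r i)

/-- `x` decomposes into exactly `k` `(s,t)`-path flows, plus possibly a circulation. -/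
def SplittableC [DecidableEq E] (D : MultiDigraph V E) (s t : V) (x : E → ℝ) (k : ℕ) : Prop :=
  ∃ (P : Fin k → List E) (r : Fin k → ℝ) (c : E → ℝ),
    D.IsCirculation c ∧ (∀ i, D.IsPath s t (P i) ∧ 0 < r i) ∧
    x = c + ∑ i, pathFlow (P i) (r i)

/-- The cost of a path: its number of distinct colours. -/
def pathCost {C : Type} [DecidableEq C] (col : E → C) (p : List E) : ℕ :=
  (p.map col).toFinset.card

/-- `x` admits a decomposition into `(s,t)`-path flows (plus possibly a circulation,
which does not affect the cost) whose total colour-cost is `K`. -/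
def DecompCost [DecidableEq E] {C : Type} [DecidableEq C] (D : MultiDigraph V E)
    (col : E → C) (s t : V) (x : E → ℝ) (K : ℕ) : Prop :=
  ∃ (k : ℕ) (P : Fin k → List E) (r : Fin k → ℝ) (c : E → ℝ),
    D.IsCirculation c ∧ (∀ i, D.IsPath s t (P i) ∧ 0 < r i) ∧
    x = c + ∑ i, pathFlow (P i) (r i) ∧ ∑ i, pathCost col (P i) = K

/-- `x` admits a decomposition into `(s,t)`-path flows (only) of total colour-cost `K`. -/
def DecompCostPure [DecidableEq E] {C : Type} [DecidableEq C] (D : MultiDigraph V E)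
    (col : E → C) (s t : V) (x : E → ℝ) (K : ℕ) : Prop :=
  ∃ (k : ℕ) (P : Fin k → List E) (r : Fin k → ℝ),
    (∀ i, D.IsPath s t (P i) ∧ 0 < r i) ∧
    x = ∑ i, pathFlow (P i) (r i) ∧ ∑ i, pathCost col (P i) = K

end MultiDigraph

open MultiDigraph

/-!
A maximum flow in the support network may be taken with values in `{0, a}` (an augmenting path in
the residual network raises the value by `a`, and its absence exhibits a saturated cut). It then
splits into `p₁` paths of value `a`, and the rest of `x`, whose values are multiples of `b` since
`b ∣ a`, into `p₂` paths of value `b`. Conversely, a path of any decomposition carries at most the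
least value of `x` on its arcs. The paths running over arcs of value `a` only carry at most `a`
each and together form a flow in the support network, so at most `p₁ * a` in total; all others
carry at most `b`. As the values add up to `p₁ * a + p₂ * b` and `b < a`, at least `p₁ + p₂`
paths are needed.
-/

theorem add_le_add_of_weighted_le {a b σ τ : ℝ} {p₁ p₂ m n : ℕ} (hb : 0 < b) (hba : b < a)
    (hσ : σ ≤ p₁ * a) (hσm : σ ≤ m * a) (hτ : τ ≤ n * b) (h : σ + τ = p₁ * a + p₂ * b) :
    p₁ + p₂ ≤ m + n := by
  -- `(m + n) a b ≥ b σ + a τ = a (p₁ a + p₂ b) - (a - b) σ ≥ (p₁ + p₂) a b`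
  have : ((p₁ + p₂ : ℕ) : ℝ) * (a * b) ≤ ((m + n : ℕ) : ℝ) * (a * b) := by
    push_cast
    nlinarith [mul_le_mul_of_nonneg_right hσm hb.le,
      mul_le_mul_of_nonneg_right hτ (hb.trans hba).le,
      mul_nonneg (sub_nonneg.2 hσ) (sub_nonneg.2 hba.le)]
  exact_mod_cast le_of_mul_le_mul_right this (by nlinarith)

namespace MultiDigraph

variable {V E : Type}

section Walks

variable {D : MultiDigraph V E}

theorem IsWalk.append {u w v : V} {p q : List E} (hp : D.IsWalk u w p) (hq : D.IsWalk w v q) :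
    D.IsWalk u v (p ++ q) := by
  induction p generalizing u with
  | nil => cases hp; exact hq
  | cons e p ih => exact ⟨hp.1, ih hp.2⟩

theorem IsWalk.exists_suffix {u v w : V} {p : List E} (h : D.IsWalk u v p)
    (hw : w ∈ u :: p.map D.dst) :
    ∃ q, D.IsWalk w v q ∧ q <:+ p ∧ (w :: q.map D.dst) <:+ (u :: p.map D.dst) := by
  induction p generalizing u with
  | nil =>
    obtain rfl : u = v := h
    obtain rfl : w = u := by simpa using hw
    exact ⟨[], rfl, List.suffix_refl _, List.suffix_refl _⟩
  | cons e p ih =>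
    rcases eq_or_ne w u with rfl | hwu
    · exact ⟨e :: p, h, List.suffix_refl _, List.suffix_refl _⟩
    · obtain ⟨q, hq, hqp, htrail⟩ := ih h.2 (by simpa [hwu] using hw)
      exact ⟨q, hq, hqp.trans (List.suffix_cons _ _), htrail.trans (List.suffix_cons _ _)⟩

theorem IsWalk.nodup_of_nodup_trail {u v : V} {p : List E} (h : D.IsWalk u v p)
    (hn : (u :: p.map D.dst).Nodup) : p.Nodup := by
  induction p generalizing u with
  | nil => exact List.nodup_nil
  | cons e p ih =>
    have hn' := (List.nodup_cons.1 hn).2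
    exact List.nodup_cons.2
      ⟨fun he => (List.nodup_cons.1 hn').1 (List.mem_map_of_mem he), ih h.2 hn'⟩

def AdjOn (D : MultiDigraph V E) (avail : E → Prop) (u v : V) : Prop :=
  ∃ e, avail e ∧ D.src e = u ∧ D.dst e = v

theorem exists_walk_of_reflTransGen {avail : E → Prop} {u v : V}
    (h : Relation.ReflTransGen (D.AdjOn avail) u v) :
    ∃ p, D.IsWalk u v p ∧ (u :: p.map D.dst).Nodup ∧ ∀ e ∈ p, avail e := by
  classical
  induction h using Relation.ReflTransGen.head_induction_on with
  | refl => exact ⟨[], rfl, by simp, by simp⟩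
  | @head u w huw _ ih =>
    obtain ⟨e, he, rfl, rfl⟩ := huw
    obtain ⟨p, hp, hn, hav⟩ := ih
    by_cases hu : D.src e ∈ D.dst e :: p.map D.dst
    · obtain ⟨q, hq, hqp, htrail⟩ := hp.exists_suffix hu
      exact ⟨q, hq, htrail.sublist.nodup hn, fun f hf => hav f (hqp.subset hf)⟩
    · refine ⟨e :: p, ⟨rfl, hp⟩, List.nodup_cons.2 ⟨hu, hn⟩, ?_⟩
      rintro f (_ | ⟨_, hf⟩)
      exacts [he, hav f hf]

theorem exists_path_of_reflTransGen {avail : E → Prop} {u v : V}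
    (h : Relation.ReflTransGen (D.AdjOn avail) u v) :
    ∃ p, D.IsPath u v p ∧ ∀ e ∈ p, avail e := by
  obtain ⟨p, hp, hn, hav⟩ := exists_walk_of_reflTransGen h
  exact ⟨p, ⟨hp, hp.nodup_of_nodup_trail hn⟩, hav⟩

end Walks

section Decompositions

variable [DecidableEq E] {D : MultiDigraph V E}

theorem pathFlow_nil (r : ℝ) : pathFlow ([] : List E) r = 0 := by
  ext; simp [pathFlow]

theorem pathFlow_cons {e : E} {p : List E} (he : e ∉ p) (r : ℝ) :
    pathFlow (e :: p) r = Pi.single e r + pathFlow p r := by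
  ext f
  by_cases hf : f = e
  · subst hf; simp [pathFlow, he]
  · simp [pathFlow, hf]

theorem pathFlow_nonneg {p : List E} {r : ℝ} (hr : 0 ≤ r) (e : E) : 0 ≤ pathFlow p r e := by
  unfold pathFlow; split_ifs <;> simp [hr]

theorem IsCirculation.nonneg {c : E → ℝ} (h : D.IsCirculation c) (e : E) : 0 ≤ c e := by
  obtain ⟨n, C, r, hC, rfl⟩ := h
  rw [Finset.sum_apply]
  exact Finset.sum_nonneg fun i _ => pathFlow_nonneg (hC i).2.le e

theorem isCirculation_zero : D.IsCirculation 0 :=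
  ⟨0, Fin.elim0, Fin.elim0, fun i => i.elim0, by simp⟩

theorem IsCirculation.add {c d : E → ℝ} (hc : D.IsCirculation c) (hd : D.IsCirculation d) :
    D.IsCirculation (c + d) := by
  obtain ⟨n, C, r, hC, rfl⟩ := hc
  obtain ⟨m, B, u, hB, rfl⟩ := hd
  refine ⟨n + m, Fin.append C B, Fin.append r u,
    Fin.addCases (fun i => by simpa using hC i) (fun i => by simpa using hB i), ?_⟩
  simp [Fin.sum_univ_add]

theorem splittableC_zero {s t : V} : D.SplittableC s t 0 0 :=
  ⟨Fin.elim0, Fin.elim0, 0, isCirculation_zero, fun i => i.elim0, by simp⟩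

theorem SplittableC.add {s t : V} {x y : E → ℝ} {k l : ℕ} (hx : D.SplittableC s t x k)
    (hy : D.SplittableC s t y l) : D.SplittableC s t (x + y) (k + l) := by
  obtain ⟨P, r, c, hc, hP, rfl⟩ := hx
  obtain ⟨Q, u, d, hd, hQ, rfl⟩ := hy
  refine ⟨Fin.append P Q, Fin.append r u, c + d, hc.add hd,
    Fin.addCases (fun i => by simpa using hP i) (fun i => by simpa using hQ i), ?_⟩
  simp only [Fin.sum_univ_add, Fin.append_left, Fin.append_right]
  abel

theorem IsPath.splittableC_pathFlow {s t : V} {q : List E} (hq : D.IsPath s t q) {r : ℝ}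
    (hr : 0 < r) : D.SplittableC s t (pathFlow q r) 1 :=
  ⟨fun _ => q, fun _ => r, 0, isCirculation_zero, fun _ => ⟨hq, hr⟩, by simp⟩

theorem IsCycle.splittableC_pathFlow {s t : V} {q : List E} (hq : D.IsCycle q) {r : ℝ}
    (hr : 0 < r) : D.SplittableC s t (pathFlow q r) 0 :=
  ⟨Fin.elim0, Fin.elim0, pathFlow q r, ⟨1, fun _ => q, fun _ => r, fun _ => ⟨hq, hr⟩, by simp⟩,
    fun i => i.elim0, by simp⟩

theorem sum_pathFlow_apply_le {ι : Type*} [Fintype ι] {P : ι → List E} {r : ι → ℝ}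
    (hr : ∀ i, 0 ≤ r i) {c : E → ℝ} (hc : D.IsCirculation c) (I : Finset ι) (e : E) :
    ∑ i ∈ I, pathFlow (P i) (r i) e ≤ (c + ∑ i, pathFlow (P i) (r i)) e := by
  rw [Pi.add_apply, Finset.sum_apply]
  linarith [hc.nonneg e, Finset.sum_le_sum_of_subset_of_nonneg (Finset.subset_univ I)
    fun i _ _ => pathFlow_nonneg (p := P i) (hr i) e]

end Decompositions

section Excess

variable [Fintype E] [DecidableEq V] (D : MultiDigraph V E)

theorem excess_add (x y : E → ℝ) (v : V) :
    D.excess (x + y) v = D.excess x v + D.excess y v := by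
  simp only [excess, ← Finset.sum_filter, Pi.add_apply, Finset.sum_add_distrib]
  ring

theorem excess_sub (x y : E → ℝ) (v : V) :
    D.excess (x - y) v = D.excess x v - D.excess y v := by
  simp only [excess, ← Finset.sum_filter, Pi.sub_apply, Finset.sum_sub_distrib]
  ring

theorem excess_zero (v : V) : D.excess 0 v = 0 := by
  simp [excess]

theorem excess_sum {ι : Type*} (I : Finset ι) (f : ι → E → ℝ) (v : V) :
    D.excess (∑ i ∈ I, f i) v = ∑ i ∈ I, D.excess (f i) v := by
  simp only [excess, ← Finset.sum_filter, Finset.sum_apply, Finset.sum_sub_distrib]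
  rw [Finset.sum_comm, Finset.sum_comm (s := Finset.univ.filter _)]

theorem excess_pi_single [DecidableEq E] (e : E) (r : ℝ) (v : V) :
    D.excess (Pi.single e r) v = (if D.src e = v then r else 0) - if D.dst e = v then r else 0 := by
  simp only [excess]
  rw [Fintype.sum_eq_single e fun f hf => by simp [hf],
    Fintype.sum_eq_single e fun f hf => by simp [hf]]
  simp

theorem sum_excess_eq_cut (x : E → ℝ) (S : Finset V) :
    ∑ v ∈ S, D.excess x v
      = (∑ e, if D.src e ∈ S ∧ D.dst e ∉ S then x e else 0)
        - ∑ e, if D.dst e ∈ S ∧ D.src e ∉ S then x e else 0 := by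
  simp only [excess, Finset.sum_sub_distrib]
  rw [Finset.sum_comm, Finset.sum_comm (s := S)]
  simp only [Finset.sum_ite_eq, ← Finset.sum_sub_distrib]
  refine Finset.sum_congr rfl fun e _ => ?_
  by_cases h₁ : D.src e ∈ S <;> by_cases h₂ : D.dst e ∈ S <;> simp [h₁, h₂]

theorem excess_eq_cut (x : E → ℝ) {s : V} (R : V → Prop) [DecidablePred R] (hs : R s)
    (hcons : ∀ v, R v → v ≠ s → D.excess x v = 0) :
    D.excess x s
      = (∑ e, if R (D.src e) ∧ ¬R (D.dst e) then x e else 0)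
        - ∑ e, if R (D.dst e) ∧ ¬R (D.src e) then x e else 0 := by
  classical
  set S : Finset V := insert s ((Finset.univ.image D.src ∪ Finset.univ.image D.dst).filter R)
  have hS : ∀ v ∈ S, R v := by
    intro v hv
    rcases Finset.mem_insert.1 hv with rfl | hv
    exacts [hs, (Finset.mem_filter.1 hv).2]
  have hsrc : ∀ e, D.src e ∈ S ↔ R (D.src e) := fun e =>
    ⟨hS _, fun h => Finset.mem_insert_of_mem (by simp [h])⟩
  have hdst : ∀ e, D.dst e ∈ S ↔ R (D.dst e) := fun e =>
    ⟨hS _, fun h => Finset.mem_insert_of_mem (by simp [h])⟩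
  have hsum : ∑ v ∈ S, D.excess x v = D.excess x s :=
    Finset.sum_eq_single_of_mem s (Finset.mem_insert_self _ _)
      fun v hv hvs => hcons v (hS v hv) hvs
  simp only [← hsum, sum_excess_eq_cut, hsrc, hdst]

theorem excess_eq_zero_of_forall_ne (x : E → ℝ) {s : V}
    (hcons : ∀ v, v ≠ s → D.excess x v = 0) : D.excess x s = 0 := by
  simpa using D.excess_eq_cut x (fun _ => True) trivial fun v _ => hcons v

theorem excess_add_excess_eq_zero (x : E → ℝ) {s t : V} (hst : s ≠ t)
    (hcons : ∀ v, v ≠ s → v ≠ t → D.excess x v = 0) :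
    D.excess x s + D.excess x t = 0 := by
  rw [D.excess_eq_cut x (· ≠ t) hst fun v hvt hvs => hcons v hvs hvt, excess]
  simp only [← Finset.sum_sub_distrib, ← Finset.sum_add_distrib]
  refine Finset.sum_eq_zero fun e _ => ?_
  by_cases h₁ : D.src e = t <;> by_cases h₂ : D.dst e = t <;> simp [h₁, h₂]

theorem excess_eq_zero_of_value_eq_zero (x : E → ℝ) {s t : V}
    (hcons : ∀ v, v ≠ s → v ≠ t → D.excess x v = 0) (hs : D.excess x s = 0) (v : V) :
    D.excess x v = 0 := by
  by_cases hvs : v = s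
  · rwa [hvs]
  by_cases hvt : v = t
  · subst hvt
    linarith [D.excess_add_excess_eq_zero x (Ne.symm hvs) hcons]
  exact hcons v hvs hvt

end Excess

section Flows

variable [Fintype E] [DecidableEq V] {D : MultiDigraph V E}

theorem excess_add_inflow_nonpos {w : E → ℝ} {s : V} (R : V → Prop)
    [DecidablePred R] (hs : R s) (hcons : ∀ v, R v → v ≠ s → D.excess w v = 0)
    (hclosed : ∀ e, R (D.src e) → 0 < w e → R (D.dst e)) :
    D.excess w s + ∑ e, (if R (D.dst e) ∧ ¬R (D.src e) then w e else 0) ≤ 0 := by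
  have hout : (∑ e, if R (D.src e) ∧ ¬R (D.dst e) then w e else 0) ≤ 0 :=
    Finset.sum_nonpos fun e _ => by
      split_ifs with h
      exacts [not_lt.1 fun hpos => h.2 (hclosed e h.1 hpos), le_rfl]
  rw [D.excess_eq_cut w R hs hcons]
  linarith

theorem exists_path_of_excess_pos {w : E → ℝ} (hw : ∀ e, 0 ≤ w e) {s t : V}
    (hcons : ∀ v, v ≠ s → v ≠ t → D.excess w v = 0) (hpos : 0 < D.excess w s) :
    ∃ p, D.IsPath s t p ∧ ∀ e ∈ p, 0 < w e := by
  classical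
  -- Otherwise the vertices reachable from `s` along arcs of positive flow form a cut that
  -- nothing leaves, although `s` has positive excess.
  set R := Relation.ReflTransGen (D.AdjOn (0 < w ·)) s
  refine exists_path_of_reflTransGen (by_contra fun ht => ?_)
  have hin : 0 ≤ ∑ e, if R (D.dst e) ∧ ¬R (D.src e) then w e else 0 :=
    Finset.sum_nonneg fun e _ => by split_ifs <;> simp [hw e]
  linarith [excess_add_inflow_nonpos R .refl (fun v hv hvs => hcons v hvs fun hvt => ht (hvt ▸ hv))
    fun e he hpos => he.tail ⟨e, hpos, rfl, rfl⟩]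

theorem exists_cycle_of_excess_eq_zero {w : E → ℝ} (hw : ∀ e, 0 ≤ w e)
    (hbal : ∀ v, D.excess w v = 0) {e₀ : E} (he₀ : 0 < w e₀) :
    ∃ p, D.IsCycle p ∧ ∀ e ∈ p, 0 < w e := by
  classical
  -- Otherwise the vertices reachable from `dst e₀` along arcs of positive flow form a cut that
  -- `e₀` enters and nothing leaves, although all excesses vanish.
  set R := Relation.ReflTransGen (D.AdjOn (0 < w ·)) (D.dst e₀)
  have hreach : R (D.src e₀) := by
    by_contra h
    have hin := Finset.single_le_sum (f := fun e => if R (D.dst e) ∧ ¬R (D.src e) then w e else 0)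
      (fun e _ => by split_ifs <;> simp [hw e]) (Finset.mem_univ e₀)
    simp only [R, Relation.ReflTransGen.refl, h, not_false_eq_true, and_self, if_true] at hin
    linarith [hbal (D.dst e₀), excess_add_inflow_nonpos R .refl (fun v _ _ => hbal v)
      fun e he hpos => he.tail ⟨e, hpos, rfl, rfl⟩]
  obtain ⟨p, hp, hn, hav⟩ := exists_walk_of_reflTransGen hreach
  have he₀p : e₀ ∉ p := fun he => (List.nodup_cons.1 hn).1 (List.mem_map_of_mem he)
  refine ⟨p ++ [e₀], ⟨by simp, ?_, D.dst e₀, hp.append ⟨rfl, rfl⟩⟩, ?_⟩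
  · exact List.nodup_append.2 ⟨hp.nodup_of_nodup_trail hn, List.nodup_singleton _,
      fun e he f hf hef => he₀p (by simp_all)⟩
  · simpa [or_imp, forall_and, he₀] using hav

theorem IsMaxFlow.excess_eq {u x y : E → ℝ} {s t : V} (hx : D.IsMaxFlow u s t x)
    (hy : D.IsMaxFlow u s t y) : D.excess x s = D.excess y s :=
  le_antisymm (hy.2.2 x hx.1 hx.2.1) (hx.2.2 y hy.1 hy.2.1)

variable [DecidableEq E]

theorem IsWalk.excess_pathFlow {u v : V} {p : List E} (h : D.IsWalk u v p) (hn : p.Nodup)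
    (r : ℝ) (w : V) :
    D.excess (pathFlow p r) w = (if u = w then r else 0) - if v = w then r else 0 := by
  induction p generalizing u with
  | nil => obtain rfl : u = v := h; simp [pathFlow_nil, excess_zero]
  | cons e p ih =>
    obtain ⟨hu, hp⟩ := h
    rw [pathFlow_cons (List.nodup_cons.1 hn).1, excess_add, excess_pi_single,
      ih hp (List.nodup_cons.1 hn).2, hu]
    ring

theorem excess_sum_pathFlow {ι : Type*} (I : Finset ι) {s t : V} {P : ι → List E}
    (hP : ∀ i ∈ I, D.IsPath s t (P i)) (r : ι → ℝ) (w : V) :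
    D.excess (∑ i ∈ I, pathFlow (P i) (r i)) w
      = (if s = w then ∑ i ∈ I, r i else 0) - if t = w then ∑ i ∈ I, r i else 0 := by
  rw [excess_sum, Finset.sum_congr rfl fun i hi => (hP i hi).1.excess_pathFlow (hP i hi).2 _ _,
    Finset.sum_sub_distrib]
  split_ifs <;> simp

theorem IsCycle.excess_pathFlow {q : List E} (hq : D.IsCycle q) (r : ℝ) (w : V) :
    D.excess (pathFlow q r) w = 0 := by
  obtain ⟨-, hnd, u, hu⟩ := hq
  rw [hu.excess_pathFlow hnd, sub_self]

theorem IsCirculation.excess_eq_zero {c : E → ℝ} (h : D.IsCirculation c) (w : V) :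
    D.excess c w = 0 := by
  obtain ⟨n, C, r, hC, rfl⟩ := h
  rw [excess_sum]
  exact Finset.sum_eq_zero fun i _ => (hC i).1.excess_pathFlow _ _

theorem exists_natCast_mul_eq_add_pathFlow {n : E → ℕ} {q : List E} (hq : ∀ e ∈ q, 0 < n e)
    (hne : q ≠ []) (c : ℝ) :
    ∃ n' : E → ℕ, ∑ e, n' e < ∑ e, n e ∧
      (fun e => (n e : ℝ) * c) = (fun e => (n' e : ℝ) * c) + pathFlow q c := by
  refine ⟨fun e => n e - if e ∈ q then 1 else 0, ?_, ?_⟩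
  · obtain ⟨e, he⟩ := List.exists_mem_of_ne_nil q hne
    exact Finset.sum_lt_sum (fun _ _ => Nat.sub_le _ _)
      ⟨e, Finset.mem_univ e, by simpa [he] using hq e he⟩
  · ext e
    by_cases he : e ∈ q
    · simp [he, pathFlow, Nat.cast_sub (hq e he), sub_mul]
    · simp [he, pathFlow]

theorem splittableC_natCast_mul {c : ℝ} (hc : 0 < c) {s t : V} (n : E → ℕ) (p : ℕ)
    (hcons : ∀ v, v ≠ s → v ≠ t → D.excess (fun e => n e * c) v = 0)
    (hs : D.excess (fun e => n e * c) s = p * c) :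
    D.SplittableC s t (fun e => n e * c) p := by
  -- Peel off a path (a cycle once the value is `0`) within the support and recurse on `∑ e, n e`.
  induction hN : ∑ e, n e using Nat.strong_induction_on generalizing n p with
  | _ N ih =>
  set w : E → ℝ := fun e => n e * c
  have hw : ∀ e, 0 ≤ w e := fun e => by positivity
  have peel : ∀ (q : List E) (k p' : ℕ), q ≠ [] → (∀ e ∈ q, 0 < w e) →
      D.SplittableC s t (pathFlow q c) k → p' + k = p →
      (∀ v, v ≠ s → v ≠ t → D.excess (pathFlow q c) v = 0) →
      D.excess (pathFlow q c) s = k * c → D.SplittableC s t w p := by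
    intro q k p' hne hqw hk hp' hqcons hqs
    obtain ⟨n', hlt, hsplit⟩ := exists_natCast_mul_eq_add_pathFlow
      (fun e he => Nat.cast_pos.1 (pos_of_mul_pos_left (hqw e he) hc.le)) hne c
    have hex : ∀ v, D.excess w v = D.excess (fun e => n' e * c) v + D.excess (pathFlow q c) v :=
      fun v => by rw [show w = _ from hsplit, excess_add]
    rw [show w = _ from hsplit, ← hp']
    refine (ih _ (hN ▸ hlt) n' p' (fun v hvs hvt => ?_) ?_ rfl).add hk
    · linarith [hex v, hcons v hvs hvt, hqcons v hvs hvt]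
    · rw [← hp'] at hs
      push_cast at hs
      linarith [hex s]
  rcases p with _ | p
  · by_cases hn : ∀ e, n e = 0
    · have hw0 : w = 0 := by ext e; simp [w, hn]
      simpa [hw0] using (splittableC_zero : D.SplittableC s t 0 0)
    obtain ⟨e₀, he₀⟩ := not_forall.1 hn
    have hbal := D.excess_eq_zero_of_value_eq_zero w hcons (by simpa using hs)
    obtain ⟨q, hq, hqw⟩ := exists_cycle_of_excess_eq_zero hw hbal (by positivity : 0 < w e₀)
    exact peel q 0 0 hq.1 hqw (hq.splittableC_pathFlow hc) rfl
      (fun v _ _ => hq.excess_pathFlow c v) (by simp [hq.excess_pathFlow])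
  · have hpos : 0 < D.excess w s := by rw [hs]; positivity
    have hst : s ≠ t := by
      rintro rfl
      linarith [D.excess_eq_zero_of_forall_ne w fun v hv => hcons v hv hv]
    obtain ⟨q, hq, hqw⟩ := exists_path_of_excess_pos hw hcons hpos
    refine peel q 1 p (fun h => hst (by rw [h] at hq; exact hq.1)) hqw (hq.splittableC_pathFlow hc)
      rfl (fun v hvs hvt => ?_) ?_
    · simp [hq.1.excess_pathFlow hq.2, Ne.symm hvs, Ne.symm hvt]
    · simp [hq.1.excess_pathFlow hq.2, Ne.symm hst]

theorem splittableC_of_forall_exists_natCast_mul {c : ℝ} (hc : 0 < c) {s t : V} {x : E → ℝ}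
    {p : ℕ} (hx : ∀ e, ∃ n : ℕ, x e = n * c)
    (hcons : ∀ v, v ≠ s → v ≠ t → D.excess x v = 0) (hs : D.excess x s = p * c) :
    D.SplittableC s t x p := by
  choose n hn using hx
  obtain rfl : x = fun e => n e * c := funext hn
  exact splittableC_natCast_mul hc n p hcons hs

theorem splittableC_of_indicator {a b : ℝ} (hb : 0 < b) (hba : b < a) {m : ℕ} (hm : a = m * b)
    {s t : V} {x : E → ℝ} (hflow : D.IsSTFlow s t x) (hvals : ∀ e, x e = 0 ∨ x e = a ∨ x e = b)
    {F : Finset E} (hxF : ∀ e ∈ F, x e = a) (hF : D.IsSTFlow s t fun e => if e ∈ F then a else 0)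
    {p₁ p₂ : ℕ} (hp₁ : D.excess (fun e => if e ∈ F then a else 0) s = p₁ * a)
    (hp₂ : D.excess (x - fun e => if e ∈ F then a else 0) s = p₂ * b) :
    D.SplittableC s t x (p₁ + p₂) := by
  have h₁ := splittableC_of_forall_exists_natCast_mul (hb.trans hba) (fun e => by
    by_cases he : e ∈ F
    exacts [⟨1, by simp [he]⟩, ⟨0, by simp [he]⟩]) hF.2 hp₁
  have h₂ := splittableC_of_forall_exists_natCast_mul hb (fun e => by
    by_cases he : e ∈ F
    · exact ⟨0, by simp [he, hxF e he]⟩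
    rcases hvals e with h | h | h
    exacts [⟨0, by simp [he, h]⟩, ⟨m, by simp [he, h, hm]⟩, ⟨1, by simp [he, h]⟩])
    (fun v hvs hvt => by rw [excess_sub, hflow.2 v hvs hvt, hF.2 v hvs hvt, sub_zero]) hp₂
  simpa using h₁.add h₂

end Flows

section MaxFlow

-- `.inl e` is the arc `e` itself, `.inr e` its reversal.
def residual (D : MultiDigraph V E) : MultiDigraph V (E ⊕ E) where
  src := Sum.elim D.src D.dst
  dst := Sum.elim D.dst D.src

def residualAvail (u y : E → ℝ) : E ⊕ E → Prop :=
  Sum.elim (fun e => y e < u e) (fun e => 0 < y e)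

variable [Fintype E] [DecidableEq V] {D : MultiDigraph V E}

theorem excess_residual (z : E ⊕ E → ℝ) (v : V) :
    D.residual.excess z v = D.excess (fun e => z (.inl e) - z (.inr e)) v := by
  rw [excess, Fintype.sum_sum_type, Fintype.sum_sum_type]
  change ((∑ e, if D.src e = v then z (.inl e) else 0)
      + ∑ e, if D.dst e = v then z (.inr e) else 0)
    - ((∑ e, if D.dst e = v then z (.inl e) else 0)
      + ∑ e, if D.src e = v then z (.inr e) else 0) = _
  simp only [excess, ← Finset.sum_filter, Finset.sum_sub_distrib]
  ring

theorem isMaxFlow_of_not_reflTransGen {u y : E → ℝ} {s t : V} (hy : D.IsFlowUnder u y)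
    (hyf : D.IsSTFlow s t y)
    (ht : ¬Relation.ReflTransGen (D.residual.AdjOn (residualAvail u y)) s t) :
    D.IsMaxFlow u s t y := by
  classical
  refine ⟨hy, hyf, fun z hz hzf => ?_⟩
  set R := Relation.ReflTransGen (D.residual.AdjOn (residualAvail u y)) s
  have hcons : ∀ x, D.IsSTFlow s t x → ∀ v, R v → v ≠ s → D.excess x v = 0 :=
    fun x hx v hv hvs => hx.2 v hvs fun hvt => ht (hvt ▸ hv)
  have hsat : ∀ e, R (D.src e) → ¬R (D.dst e) → u e ≤ y e := fun e h₁ h₂ =>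
    not_lt.1 fun hlt => h₂ (h₁.tail ⟨.inl e, hlt, rfl, rfl⟩)
  have hempty : ∀ e, R (D.dst e) → ¬R (D.src e) → y e ≤ 0 := fun e h₁ h₂ =>
    not_lt.1 fun hlt => h₂ (h₁.tail ⟨.inr e, hlt, rfl, rfl⟩)
  rw [D.excess_eq_cut z R .refl (hcons z hzf), D.excess_eq_cut y R .refl (hcons y hyf)]
  refine sub_le_sub (Finset.sum_le_sum fun e _ => ?_) (Finset.sum_le_sum fun e _ => ?_)
  · split_ifs with h
    exacts [(hz e).2.trans (hsat e h.1 h.2), le_rfl]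
  · split_ifs with h
    exacts [(hempty e h.1 h.2).trans (hz e).1, le_rfl]

variable [DecidableEq E]

def augment (F : Finset E) (q : List (E ⊕ E)) : Finset E :=
  F.filter (fun e => (.inr e : E ⊕ E) ∉ q.toFinset) ∪
    Finset.univ.filter (fun e => (.inl e : E ⊕ E) ∈ q.toFinset)

section Augment

variable {u : E → ℝ} {a : ℝ} {F : Finset E} {q : List (E ⊕ E)}

theorem ite_mem_augment (hF : ∀ e ∈ F, u e = a)
    (hq : ∀ ra ∈ q, residualAvail u (fun e => if e ∈ F then a else 0) ra) :
    (fun e => if e ∈ augment F q then a else 0)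
      = (fun e => if e ∈ F then a else 0)
        + fun e => pathFlow q a (.inl e) - pathFlow q a (.inr e) := by
  funext e
  have hinl : .inl e ∈ q → e ∉ F := fun h he => by
    simpa [residualAvail, he, hF e he] using hq _ h
  have hinr : .inr e ∈ q → e ∈ F := fun h => by
    by_contra he
    simpa [residualAvail, he] using hq _ h
  by_cases h₁ : .inl e ∈ q <;> by_cases h₂ : .inr e ∈ q
  · exact absurd (hinr h₂) (hinl h₁)
  · simp [augment, pathFlow, h₁, h₂, hinl h₁]
  · simp [augment, pathFlow, h₁, h₂, hinr h₂]
  · by_cases he : e ∈ F <;> simp [augment, pathFlow, h₁, h₂, he]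

theorem excess_ite_mem_augment (hF : ∀ e ∈ F, u e = a) {s t : V} (hq : D.residual.IsPath s t q)
    (hqav : ∀ ra ∈ q, residualAvail u (fun e => if e ∈ F then a else 0) ra) (v : V) :
    D.excess (fun e => if e ∈ augment F q then a else 0) v
      = D.excess (fun e => if e ∈ F then a else 0) v
        + ((if s = v then a else 0) - if t = v then a else 0) := by
  rw [ite_mem_augment hF hqav, excess_add, ← excess_residual, hq.1.excess_pathFlow hq.2]

theorem forall_mem_augment (hu : ∀ e, u e = 0 ∨ u e = a) (hF : ∀ e ∈ F, u e = a)
    (hq : ∀ ra ∈ q, residualAvail u (fun e => if e ∈ F then a else 0) ra) :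
    ∀ e ∈ augment F q, u e = a := by
  intro e he
  by_cases heF : e ∈ F
  · exact hF e heF
  have hinl : (.inl e : E ⊕ E) ∈ q := by simpa [augment, heF] using he
  have hlt : 0 < u e := by simpa [residualAvail, heF] using hq _ hinl
  exact (hu e).resolve_left hlt.ne'

end Augment

theorem exists_isMaxFlow_indicator {u : E → ℝ} {a : ℝ} (ha : 0 < a)
    (hu : ∀ e, u e = 0 ∨ u e = a) (s t : V) :
    ∃ F : Finset E, (∀ e ∈ F, u e = a) ∧ D.IsMaxFlow u s t (fun e => if e ∈ F then a else 0) := by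
  classical
  set Valid : Finset E → Prop := fun F => (∀ e ∈ F, u e = a) ∧
    ∀ v, v ≠ s → v ≠ t → D.excess (fun e => if e ∈ F then a else 0) v = 0
  obtain ⟨F, hFmem, hFmax⟩ := Finset.exists_max_image (Finset.univ.filter Valid)
    (fun F => D.excess (fun e => if e ∈ F then a else 0) s)
    ⟨∅, Finset.mem_filter.2 ⟨Finset.mem_univ _, by simp, fun v _ _ => D.excess_zero v⟩⟩
  obtain ⟨hFu, hFcons⟩ := (Finset.mem_filter.1 hFmem).2
  have hunder : D.IsFlowUnder u (fun e => if e ∈ F then a else 0) := fun e => by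
    by_cases he : e ∈ F
    · simp [he, hFu e he, ha.le]
    · rcases hu e with h | h <;> simp [he, h, ha.le]
  have hflow : D.IsSTFlow s t (fun e => if e ∈ F then a else 0) := ⟨fun e => (hunder e).1, hFcons⟩
  refine ⟨F, hFu, ?_⟩
  by_cases hreach : Relation.ReflTransGen
      (D.residual.AdjOn (residualAvail u fun e => if e ∈ F then a else 0)) s t
  swap
  · exact isMaxFlow_of_not_reflTransGen hunder hflow hreach
  refine ⟨hunder, hflow, fun z _ hz => ?_⟩
  rcases eq_or_ne s t with rfl | hst
  · rw [D.excess_eq_zero_of_forall_ne z fun v hv => hz.2 v hv hv,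
      D.excess_eq_zero_of_forall_ne _ fun v hv => hFcons v hv hv]
  -- An augmenting path `q` would make `augment F q` valid and of larger value.
  obtain ⟨q, hq, hqav⟩ := exists_path_of_reflTransGen hreach
  have hex := excess_ite_mem_augment hFu hq hqav
  have hvalid : Valid (augment F q) := ⟨forall_mem_augment hu hFu hqav, fun v hvs hvt => by
    rw [hex v, hFcons v hvs hvt]
    simp [Ne.symm hvs, Ne.symm hvt]⟩
  have hle := hFmax _ (Finset.mem_filter.2 ⟨Finset.mem_univ _, hvalid⟩)
  simp only [hex s, if_true, Ne.symm hst, if_false] at hle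
  linarith

theorem sum_le_excess_of_isMaxFlow {ι : Type*} (I : Finset ι) {s t : V} (hst : s ≠ t)
    {P : ι → List E} (hP : ∀ i ∈ I, D.IsPath s t (P i)) {r : ι → ℝ} (hr : ∀ i ∈ I, 0 ≤ r i)
    {u xa : E → ℝ} (hxa : D.IsMaxFlow u s t xa)
    (hcap : ∀ e, ∑ i ∈ I, pathFlow (P i) (r i) e ≤ u e) :
    ∑ i ∈ I, r i ≤ D.excess xa s := by
  have hex := excess_sum_pathFlow I hP r
  have hnonneg : ∀ e, 0 ≤ (∑ i ∈ I, pathFlow (P i) (r i)) e := fun e => by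
    rw [Finset.sum_apply]
    exact Finset.sum_nonneg fun i hi => pathFlow_nonneg (hr i hi) e
  have := hxa.2.2 _ (fun e => ⟨hnonneg e, by simpa [Finset.sum_apply] using hcap e⟩)
    ⟨hnonneg, fun v hvs hvt => by simp [hex, Ne.symm hvs, Ne.symm hvt]⟩
  simpa [hex, Ne.symm hst] using this

theorem add_le_of_splittableC {a b : ℝ} (hb : 0 < b) (hba : b < a) {s t : V} {x xa : E → ℝ}
    (hflow : D.IsSTFlow s t x) (hvals : ∀ e, x e = 0 ∨ x e = a ∨ x e = b)
    (hxa : D.IsMaxFlow (fun e => if a ≤ x e then x e else 0) s t xa) {p₁ p₂ k : ℕ}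
    (hp₁ : p₁ * a = D.excess xa s) (hp₂ : p₂ * b = D.excess (x - xa) s)
    (hk : D.SplittableC s t x k) : p₁ + p₂ ≤ k := by
  obtain ⟨P, r, c, hc, hPr, hx⟩ := hk
  rw [excess_sub] at hp₂
  rcases eq_or_ne s t with rfl | hst
  · have h₁ := D.excess_eq_zero_of_forall_ne xa fun v hv => hxa.2.1.2 v hv hv
    have h₂ := D.excess_eq_zero_of_forall_ne x fun v hv => hflow.2 v hv hv
    refine le_trans ?_ (Nat.zero_le k)
    exact add_le_add_of_weighted_le (σ := 0) (τ := 0) (m := 0) (n := 0) hb hba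
      (mul_nonneg (Nat.cast_nonneg _) (hb.trans hba).le) (by simp) (by simp) (by linarith)
  have hdom : ∀ I e, ∑ i ∈ I, pathFlow (P i) (r i) e ≤ x e := fun I e =>
    hx ▸ sum_pathFlow_apply_le (fun i => (hPr i).2.le) hc I e
  have hri : ∀ i, ∀ e ∈ P i, r i ≤ x e := fun i e he => by
    simpa [pathFlow, he] using hdom {i} e
  have hne : ∀ i, P i ≠ [] := fun i h => by
    have := (hPr i).1.1
    rw [h] at this
    exact hst this
  set S := Finset.univ.filter fun i => ∀ e ∈ P i, x e = a
  have hS : ∀ i ∈ S, r i ≤ a := fun i hi => by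
    obtain ⟨e, he⟩ := List.exists_mem_of_ne_nil _ (hne i)
    simpa [(Finset.mem_filter.1 hi).2 e he] using hri i e he
  have hT : ∀ i ∈ Sᶜ, r i ≤ b := fun i hi => by
    obtain ⟨e, he, hea⟩ : ∃ e ∈ P i, x e ≠ a := by simpa [S] using hi
    rcases hvals e with h | h | h
    · linarith [hri i e he, (hPr i).2]
    · exact absurd h hea
    · simpa [h] using hri i e he
  have hσ : ∑ i ∈ S, r i ≤ p₁ * a := hp₁ ▸ sum_le_excess_of_isMaxFlow S hst
    (fun i _ => (hPr i).1) (fun i _ => (hPr i).2.le) hxa fun e => by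
      by_cases hae : a ≤ x e
      · simpa [hae] using hdom S e
      · refine (Finset.sum_eq_zero fun i hi => ?_).trans_le (by simp [hae])
        have : e ∉ P i := fun he => hae ((Finset.mem_filter.1 hi).2 e he).ge
        simp [pathFlow, this]
  have htot : ∑ i, r i = p₁ * a + p₂ * b := by
    have := excess_sum_pathFlow Finset.univ (fun i _ => (hPr i).1) r s
    rw [hx, excess_add, hc.excess_eq_zero, this] at hp₂
    simp only [if_true, Ne.symm hst, if_false] at hp₂
    linarith
  have hcard : S.card + Sᶜ.card = k := (Finset.card_add_card_compl S).trans (Finset.card_fin k)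
  exact hcard ▸ add_le_add_of_weighted_le hb hba hσ
    (by simpa using Finset.sum_le_card_nsmul S r a hS)
    (by simpa using Finset.sum_le_card_nsmul Sᶜ r b hT)
    ((Finset.sum_add_sum_compl S r).trans htot)

end MaxFlow

end MultiDigraph

theorem stmt8_general {V E : Type} [Fintype E] [DecidableEq V] [DecidableEq E]
    (D : MultiDigraph V E) (s t : V) (a b : ℕ) (hb : 0 < b) (hba : b < a) (hdvd : b ∣ a)
    (x : E → ℝ) (hflow : D.IsSTFlow s t x)
    (hvals : ∀ e, x e = 0 ∨ x e = (a : ℝ) ∨ x e = (b : ℝ))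
    (xa : E → ℝ)
    (hxa : D.IsMaxFlow (fun e => if (a : ℝ) ≤ x e then x e else 0) s t xa)
    (p₁ p₂ : ℕ)
    (hp₁ : (p₁ : ℝ) * a = D.excess xa s)
    (hp₂ : (p₂ : ℝ) * b = D.excess (x - xa) s) :
    IsLeast {k : ℕ | D.SplittableC s t x k} (p₁ + p₂) := by
  have hb₀ : (0 : ℝ) < b := by exact_mod_cast hb
  have hba₀ : (b : ℝ) < a := by exact_mod_cast hba
  obtain ⟨m, hm⟩ := hdvd
  refine ⟨?_, fun k hk => add_le_of_splittableC hb₀ hba₀ hflow hvals hxa hp₁ hp₂ hk⟩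
  obtain ⟨F, hFa, hF⟩ := D.exists_isMaxFlow_indicator (hb₀.trans hba₀)
    (u := fun e => if (a : ℝ) ≤ x e then x e else 0)
    (fun e => by rcases hvals e with h | h | h <;> simp [h, hba₀.not_ge]) s t
  have hxF : ∀ e ∈ F, x e = a := fun e he => by
    have := hFa e he
    split_ifs at this
    exacts [this, absurd this.symm (hb₀.trans hba₀).ne']
  refine splittableC_of_indicator hb₀ hba₀ (m := m) (by rw [hm]; push_cast; ring) hflow hvals hxF
    hF.2.1 ((hF.excess_eq hxa).trans hp₁.symm) ?_
  rw [excess_sub, hF.excess_eq hxa, ← excess_sub, hp₂]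

/-- Two-value case with divisibility: if the `(s,t)`-flow `x` has exactly the two
distinct positive arc values `a > b` with `b ∣ a`, then the minimum number of path
flows needed to decompose `x` (apart from a circulation) is `p₁ + p₂`, where
`p₁ = |x_a|/a` for a maximum `(s,t)`-flow `x_a` in the support network restricted to
arcs of flow value at least `a` (with capacities `x`), and `p₂ = |x − x_a|/b`. -/
theorem stmt8 {V E : Type} [Fintype E] [DecidableEq V] [DecidableEq E]
    (D : MultiDigraph V E) (s t : V) (a b : ℕ) (hb : 0 < b) (hba : b < a) (hdvd : b ∣ a)
    (x : E → ℝ) (hflow : D.IsSTFlow s t x)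
    (hvals : ∀ e, x e = 0 ∨ x e = (a : ℝ) ∨ x e = (b : ℝ))
    (hea : ∃ e, x e = (a : ℝ)) (heb : ∃ e, x e = (b : ℝ))
    (xa : E → ℝ)
    (hxa : D.IsMaxFlow (fun e => if (a : ℝ) ≤ x e then x e else 0) s t xa)
    (p₁ p₂ : ℕ)
    (hp₁ : (p₁ : ℝ) * a = D.excess xa s)
    (hp₂ : (p₂ : ℝ) * b = D.excess (x - xa) s) :
    IsLeast {k : ℕ | D.SplittableC s t x k} (p₁ + p₂) :=
  stmt8_general D s t a b hb hba hdvd x hflow hvals xa hxa p₁ p₂ hp₁ hp₂
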